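/- Let n ∼ CN(0, σ²), a ∈ ℂ, c > 0. Then |a|·|E[exp(i·c·|a+n|²)]| = (|a|/√(1+σ⁴c²))·exp(−σ²c²|a|²/(1+σ⁴c²)), and its supremum over a ∈ ℂ equals 1/(√(2e)·σ·c). -/

import Mathlib

/-!
Write `n = X + iY` with `X, Y` independent `N(0, σ²/2)`. Then `|a + n|² = (Re a + X)² + (Im a + Y)²`
and the expectation factors. For `X ~ N(m, v)` the Gaussian integral of a complex quadratic
exponential gives `E[exp(z X²)] = (1 - 2vz)^(-1/2) exp(z m² / (1 - 2vz))` (the moment generating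
function of a noncentral `χ²₁`), so the two factors multiply to
`(1 - iσ²c)⁻¹ exp(ic|a|² / (1 - iσ²c))`, whose modulus is the stated closed form. What remains is
maximising `r exp(-k r²)`: by `exp x ≥ 1 + x` at `x = 2kr² - 1` its square is at most
`1 / (2ek)`, with equality at `r = 1 / √(2k)`.
-/

open Real MeasureTheory ProbabilityTheory Complex

/-- The circularly symmetric complex Gaussian distribution `CN(0, v)`:
real and imaginary parts are independent `N(0, v/2)`. -/
noncomputable def complexGaussian (v : ℝ) : Measure ℂ :=
  Measure.map (fun p : ℝ × ℝ => (p.1 : ℂ) + p.2 * Complex.I)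
    ((gaussianReal 0 (v / 2).toNNReal).prod (gaussianReal 0 (v / 2).toNNReal))

open scoped NNReal

theorem Complex.ofReal_mul_cpow {a : ℝ} (ha : 0 < a) {x : ℂ} (hx : x ≠ 0) (r : ℂ) :
    ((a : ℂ) * x) ^ r = (a : ℂ) ^ r * x ^ r := by
  have ha' : (a : ℂ) ≠ 0 := ofReal_ne_zero.mpr ha.ne'
  rw [cpow_def_of_ne_zero (mul_ne_zero ha' hx), log_ofReal_mul ha hx, ofReal_log ha.le,
    add_mul, exp_add, ← cpow_def_of_ne_zero ha', ← cpow_def_of_ne_zero hx]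

theorem Complex.ofReal_mul_inv_cpow_half {a : ℝ} (ha : 0 < a) {w : ℂ} (hw : 0 < w.re) :
    ((a : ℂ) * w⁻¹) ^ (1 / 2 : ℂ) = √a * w ^ (-(1 / 2) : ℂ) := by
  have hw0 : w ≠ 0 := fun h => by simp [h] at hw
  have harg : w.arg ≠ π := fun h => by
    rw [arg_eq_pi_iff] at h; linarith [h.1]
  rw [ofReal_mul_cpow ha (inv_ne_zero hw0), inv_cpow _ _ harg, ← cpow_neg, sqrt_eq_rpow,
    ofReal_cpow ha.le]
  norm_num

theorem integral_cexp_mul_sq_gaussianReal (m : ℝ) (v : ℝ≥0) (z : ℂ) (hz : 2 * v * z.re < 1) :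
    ∫ x, cexp (z * x ^ 2) ∂gaussianReal m v
      = (1 - 2 * v * z) ^ (-(1 / 2) : ℂ) * cexp (z * m ^ 2 / (1 - 2 * v * z)) := by
  rcases eq_or_ne v 0 with rfl | hv
  · simp [gaussianReal_zero_var]
  set w : ℂ := 1 - 2 * v * z
  have hv₀ : (0 : ℝ) < v := NNReal.coe_pos.mpr (pos_iff_ne_zero.mpr hv)
  have hv' : (v : ℂ) ≠ 0 := by exact_mod_cast hv
  have hw : 0 < w.re := by simpa [w] using hz
  have hw0 : w ≠ 0 := fun h => by simp [h] at hw
  set b : ℂ := z - (2 * (v : ℂ))⁻¹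
  have hnegb : -b = ((2 * v : ℝ) : ℂ)⁻¹ * w := by simp only [b, w]; push_cast; field_simp; ring
  have hb : b.re < 0 := by
    rw [← neg_neg b, hnegb, neg_re, ← ofReal_inv, re_ofReal_mul, neg_neg_iff_pos]
    exact mul_pos (by positivity) hw
  calc ∫ x, cexp (z * x ^ 2) ∂gaussianReal m v
    _ = (√(2 * π * v))⁻¹ * ∫ x : ℝ, cexp (b * x ^ 2 + (m / v) * x + -m ^ 2 / (2 * v)) := by
      simp_rw [integral_gaussianReal_eq_integral_smul hv, Complex.real_smul, gaussianPDFReal]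
      push_cast
      simp_rw [mul_assoc, integral_const_mul, ← Complex.exp_add]
      congr with x
      congr 1
      simp only [b]
      field_simp
      ring
    _ = (√(2 * π * v))⁻¹ * (π / -b) ^ (1 / 2 : ℂ)
        * cexp (-m ^ 2 / (2 * v) - (m / v) ^ 2 / (4 * b)) := by
      rw [integral_cexp_quadratic hb, ← mul_assoc]
    _ = w ^ (-(1 / 2) : ℂ) * cexp (z * m ^ 2 / w) := by
      congr 1
      · have hpi : (π / -b : ℂ) = ((2 * π * v : ℝ) : ℂ) * w⁻¹ := by
          rw [hnegb]; push_cast; field_simp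
        have hsqrt0 : (√(2 * π * v) : ℂ) ≠ 0 := by
          rw [ofReal_ne_zero]; positivity
        rw [hpi, ofReal_mul_inv_cpow_half (by positivity) hw]
        push_cast
        field_simp
      · have hb' : b = -(w / (2 * v)) := by rw [← neg_neg b, hnegb]; push_cast; ring
        rw [hb']
        congr 1
        field_simp
        simp only [w]
        ring

theorem integral_cexp_mul_add_sq_gaussianReal (m : ℝ) (v : ℝ≥0) (z : ℂ) (hz : 2 * v * z.re < 1) :
    ∫ x, cexp (z * ((m + x : ℝ) : ℂ) ^ 2) ∂gaussianReal 0 v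
      = (1 - 2 * v * z) ^ (-(1 / 2) : ℂ) * cexp (z * m ^ 2 / (1 - 2 * v * z)) := by
  rw [← integral_cexp_mul_sq_gaussianReal m v z hz, ← zero_add m, ← gaussianReal_map_const_add,
    integral_map (by fun_prop) (by fun_prop), zero_add]

theorem integral_cexp_mul_norm_add_sq_complexGaussian {v : ℝ} (hv : 0 ≤ v) (z : ℂ)
    (hz : v * z.re < 1) (a : ℂ) :
    ∫ w, cexp (z * ‖a + w‖ ^ 2) ∂complexGaussian v
      = (1 - v * z)⁻¹ * cexp (z * ‖a‖ ^ 2 / (1 - v * z)) := by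
  have hv2 : (((v / 2).toNNReal : ℝ) : ℂ) = v / 2 := by
    rw [Real.coe_toNNReal _ (by positivity)]; push_cast; ring
  have hz2 : 2 * ((v / 2).toNNReal : ℝ) * z.re < 1 := by
    rw [Real.coe_toNNReal _ (by positivity)]; linarith
  have hw : 0 < (1 - v * z).re := by simpa using hz
  have hw0 : 1 - v * z ≠ 0 := fun h => by simp [h] at hw
  have hsplit : ∀ p : ℝ × ℝ, cexp (z * ‖a + (p.1 + p.2 * I)‖ ^ 2)
      = cexp (z * ((a.re + p.1 : ℝ) : ℂ) ^ 2) * cexp (z * ((a.im + p.2 : ℝ) : ℂ) ^ 2) := by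
    intro p
    rw [← Complex.exp_add, ← mul_add]
    congr 2
    rw [← ofReal_pow, Complex.sq_norm, normSq_apply]
    simp only [add_re, add_im, mul_re, mul_im, ofReal_re, ofReal_im, I_re, I_im]
    push_cast
    ring
  rw [complexGaussian, integral_map (by fun_prop) (by fun_prop)]
  simp_rw [hsplit]
  rw [integral_prod_mul (fun x : ℝ => cexp (z * ((a.re + x : ℝ) : ℂ) ^ 2))
      (fun y : ℝ => cexp (z * ((a.im + y : ℝ) : ℂ) ^ 2)),
    integral_cexp_mul_add_sq_gaussianReal _ _ _ hz2, integral_cexp_mul_add_sq_gaussianReal _ _ _ hz2,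
    hv2, show 1 - 2 * ((v : ℂ) / 2) * z = 1 - v * z by ring]
  have hnorm : ((‖a‖ ^ 2 : ℝ) : ℂ) = (a.re : ℂ) ^ 2 + (a.im : ℂ) ^ 2 := by
    rw [Complex.sq_norm, normSq_apply]; push_cast; ring
  calc _ = (1 - v * z) ^ (-(1 / 2) + -(1 / 2) : ℂ)
        * cexp (z * (a.re : ℂ) ^ 2 / (1 - v * z) + z * (a.im : ℂ) ^ 2 / (1 - v * z)) := by
        rw [cpow_add _ _ hw0, Complex.exp_add]; ring
    _ = _ := by
      push_cast at hnorm
      rw [hnorm, show (-(1 / 2) + -(1 / 2) : ℂ) = -1 by norm_num, cpow_neg_one,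
        mul_add, add_div]

theorem norm_integral_cexp_I_mul_norm_add_sq_complexGaussian {v : ℝ} (hv : 0 ≤ v) (t : ℝ)
    (a : ℂ) :
    ‖∫ w, cexp (I * t * ‖a + w‖ ^ 2) ∂complexGaussian v‖
      = (√(1 + v ^ 2 * t ^ 2))⁻¹ * rexp (-(v * t ^ 2 * ‖a‖ ^ 2) / (1 + v ^ 2 * t ^ 2)) := by
  rw [integral_cexp_mul_norm_add_sq_complexGaussian hv _ (by simp) a, norm_mul, norm_inv,
    norm_exp]
  congr 2
  · rw [norm_def, normSq_apply]
    congr 1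
    simp only [sub_re, sub_im, one_re, one_im, mul_re, mul_im, ofReal_re, ofReal_im, I_re, I_im]
    ring
  · rw [div_re, normSq_apply, ← ofReal_pow]
    simp only [sub_re, sub_im, one_re, one_im, mul_re, mul_im, ofReal_re, ofReal_im, I_re, I_im]
    ring

theorem mul_exp_neg_mul_sq_le {k : ℝ} (hk : 0 < k) (r : ℝ) :
    r * rexp (-(k * r ^ 2)) ≤ (√(2 * rexp 1 * k))⁻¹ := by
  have hexp : 2 * k * r ^ 2 * rexp (-(2 * k * r ^ 2)) ≤ rexp (-1) :=
    calc 2 * k * r ^ 2 * rexp (-(2 * k * r ^ 2))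
      _ ≤ rexp (2 * k * r ^ 2 - 1) * rexp (-(2 * k * r ^ 2)) := by
        gcongr; linarith [add_one_le_exp (2 * k * r ^ 2 - 1)]
      _ = rexp (-1) := by rw [← Real.exp_add]; ring_nf
  refine (le_abs_self _).trans (abs_le_sqrt ?_) |>.trans_eq (sqrt_inv _)
  calc (r * rexp (-(k * r ^ 2))) ^ 2
    _ = 2 * k * r ^ 2 * rexp (-(2 * k * r ^ 2)) / (2 * k) := by
      rw [mul_pow, ← Real.exp_nat_mul]; field_simp; ring_nf
    _ ≤ rexp (-1) / (2 * k) := by gcongr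
    _ = (2 * rexp 1 * k)⁻¹ := by rw [Real.exp_neg]; field_simp

theorem ciSup_norm_mul_exp_neg_mul_sq (E : Type*) [NormedAddCommGroup E] [NormedSpace ℝ E]
    [Nontrivial E] {k : ℝ} (hk : 0 < k) :
    ⨆ x : E, ‖x‖ * rexp (-(k * ‖x‖ ^ 2)) = (√(2 * rexp 1 * k))⁻¹ := by
  refine le_antisymm (ciSup_le fun x => mul_exp_neg_mul_sq_le hk _) ?_
  obtain ⟨x, hx⟩ := exists_norm_eq E (inv_nonneg.mpr (sqrt_nonneg (2 * k)))
  refine le_ciSup_of_le ⟨_, Set.forall_mem_range.mpr fun x => mul_exp_neg_mul_sq_le hk _⟩ x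
    (le_of_eq ?_)
  rw [hx, inv_pow, sq_sqrt (by positivity), show k * (2 * k)⁻¹ = 1 / 2 by field_simp,
    Real.exp_neg, exp_half, ← mul_inv, ← sqrt_mul (by positivity)]
  ring_nf

theorem abs_expectation_phase_and_sup_general
    {Ω : Type*} [MeasureSpace Ω] {μ : Measure Ω}
    (σ c : ℝ) (hσ : 0 < σ) (hc : 0 < c)
    (n : Ω → ℂ) (hn : Measurable n)
    (hlaw : Measure.map n μ = complexGaussian (σ ^ 2)) :
    (∀ a : ℂ,
      ‖a‖ *
          ‖∫ ω, Complex.exp (Complex.I * c * (‖a + n ω‖) ^ 2) ∂μ‖ =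
        (‖a‖ / Real.sqrt (1 + σ ^ 4 * c ^ 2)) *
          Real.exp (-σ ^ 2 * c ^ 2 * (‖a‖) ^ 2 / (1 + σ ^ 4 * c ^ 2))) ∧
      (⨆ a : ℂ,
          ‖a‖ *
            ‖∫ ω, Complex.exp (Complex.I * c * (‖a + n ω‖) ^ 2) ∂μ‖) =
        1 / (Real.sqrt (2 * Real.exp 1) * σ * c) := by
  have hS : 0 < 1 + σ ^ 4 * c ^ 2 := by positivity
  have hvalue (a : ℂ) : ‖a‖ * ‖∫ ω, cexp (I * c * ‖a + n ω‖ ^ 2) ∂μ‖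
      = (√(1 + σ ^ 4 * c ^ 2))⁻¹
        * (‖a‖ * rexp (-(σ ^ 2 * c ^ 2 / (1 + σ ^ 4 * c ^ 2) * ‖a‖ ^ 2))) := by
    rw [← integral_map (f := fun w => cexp (I * c * ‖a + w‖ ^ 2)) hn.aemeasurable
      (by fun_prop), hlaw, norm_integral_cexp_I_mul_norm_add_sq_complexGaussian (by positivity)]
    ring_nf
  refine ⟨fun a => by rw [hvalue]; ring_nf, ?_⟩
  simp_rw [hvalue]
  rw [← Real.mul_iSup_of_nonneg (by positivity), ciSup_norm_mul_exp_neg_mul_sq ℂ (by positivity),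
    ← mul_inv, ← sqrt_mul hS.le,
    show (1 + σ ^ 4 * c ^ 2) * (2 * rexp 1 * (σ ^ 2 * c ^ 2 / (1 + σ ^ 4 * c ^ 2)))
      = 2 * rexp 1 * (σ * c) ^ 2 by field_simp,
    sqrt_mul (by positivity), sqrt_sq (by positivity)]
  ring

theorem abs_expectation_phase_and_sup
    {Ω : Type*} [MeasureSpace Ω] {μ : Measure Ω} [IsProbabilityMeasure μ]
    (σ c : ℝ) (hσ : 0 < σ) (hc : 0 < c)
    (n : Ω → ℂ) (hn : Measurable n)
    (hlaw : Measure.map n μ = complexGaussian (σ ^ 2)) :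
    (∀ a : ℂ,
      ‖a‖ *
          ‖∫ ω, Complex.exp (Complex.I * c * (‖a + n ω‖) ^ 2) ∂μ‖ =
        (‖a‖ / Real.sqrt (1 + σ ^ 4 * c ^ 2)) *
          Real.exp (-σ ^ 2 * c ^ 2 * (‖a‖) ^ 2 / (1 + σ ^ 4 * c ^ 2))) ∧
      (⨆ a : ℂ,
          ‖a‖ *
            ‖∫ ω, Complex.exp (Complex.I * c * (‖a + n ω‖) ^ 2) ∂μ‖) =
        1 / (Real.sqrt (2 * Real.exp 1) * σ * c) :=
  abs_expectation_phase_and_sup_general σ c hσ hc n hn hlaw
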